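/- In any ARIF loop, R(y·xᵐ)·R(xⁿ·y⁻¹) = R(y·x^{m+k})·R(x^{n−k}·y⁻¹) for all x, y and all integers m, n, k such that k is even or m+n is even. -/

import Mathlib

/-- A loop: a magma with two-sided identity and left/right division. -/
class Loop (M : Type*) extends Mul M, One M where
  ld : M → M → M
  rd : M → M → M
  mul_ld : ∀ x y : M, x * ld x y = y
  ld_mul : ∀ x y : M, ld x (x * y) = y
  rd_mul : ∀ x y : M, rd y x * x = y
  mul_rd : ∀ x y : M, rd (y * x) x = y
  one_mul : ∀ x : M, 1 * x = x
  mul_one : ∀ x : M, x * 1 = x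

/-- An inverse property (IP) loop. -/
class IPLoop (M : Type*) extends Loop M, Inv M where
  inv_mul_cancel_left : ∀ x y : M, x⁻¹ * (x * y) = y
  mul_inv_cancel_right : ∀ x y : M, (y * x) * x⁻¹ = y

/-- Left translation `L(x) : y ↦ x * y` as a permutation. -/
def Loop.Lperm {M : Type*} [Loop M] (x : M) : Equiv.Perm M :=
  ⟨fun y => x * y, fun y => Loop.ld x y, Loop.ld_mul x, Loop.mul_ld x⟩

/-- Right translation `R(x) : y ↦ y * x` as a permutation. -/
def Loop.Rperm {M : Type*} [Loop M] (x : M) : Equiv.Perm M :=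
  ⟨fun y => y * x, fun y => Loop.rd y x, fun y => Loop.mul_rd x y, fun y => Loop.rd_mul x y⟩

/-- Integer powers: `xⁿ = 1 · L(x)ⁿ`. -/
def Loop.pow {M : Type*} [Loop M] (x : M) (n : ℤ) : M := (Loop.Lperm x ^ n) 1

/-!
First, powers of `x` are alternative: for `φ i = L(xⁱ)` (resp. `R(xⁱ)`) the ARIF identity applied
to `xˢ, xᵗ` reads `φ(s+2t) φ(s) = φ(t) φ(2s+t)` once the powers involved are known to multiply
correctly, and this recursion pins `φ i` down to `L(x)ⁱ` (resp. `R(x)ⁱ`) by induction on `|i|`.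

Then put `A i = R(y xⁱ)`, so that `A(i)⁻¹ = R(x⁻ⁱ y⁻¹)`. The right ARIF identity with flexibility,
applied to `y xⁱ` and `xʲ y⁻¹`, gives relations in the group of permutations forcing
`A(w+2) = c A(w) = A(w) d` for fixed `c, d`. Hence `c` commutes with every `A(v) A(w)⁻¹`, so the
ratio `A(w+k) A(w)⁻¹` is 2-periodic in `w`, and equals `c^(k/2)` when `k` is even. The theorem says
that this ratio takes the same value at `w = -n` and `w = m`.
-/

section ShiftIdentity

variable {G : Type*} [Group G] {A : ℤ → G} {c d : G}

theorem eq_zpow_of_step {φ : ℤ → G} {g : G} (h0 : φ 0 = 1) (h1 : φ 1 = g)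
    (hneg : ∀ i, φ i = g ^ i → φ (-i) = g ^ (-i))
    (hstep : ∀ s t, φ s = g ^ s → φ t = g ^ t →
      φ (s + 2 * t) * φ s = φ t * φ (2 * s + t))
    (i : ℤ) : φ i = g ^ i := by
  have step (s t : ℤ) (hs : φ s = g ^ s) (ht : φ t = g ^ t)
      (hst : φ (2 * s + t) = g ^ (2 * s + t)) : φ (s + 2 * t) = g ^ (s + 2 * t) := by
    have key := hstep s t hs ht
    rw [hs, ht, hst] at key
    rw [eq_mul_inv_of_mul_eq key]
    group
  have hnat (n : ℕ) : φ n = g ^ (n : ℤ) := by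
    induction n using Nat.strong_induction_on with
    | _ n ih =>
      obtain ⟨t, rfl | rfl⟩ := Nat.even_or_odd' n
      · obtain rfl | ht := t.eq_zero_or_pos
        · simpa using h0
        · have ht' := ih t (by omega)
          simpa using step 0 t (by simpa using h0) ht' (by simpa using ht')
      · rcases t with _ | t
        · simpa using h1
        -- `2t + 3 = s + 2(t + 2)` with `s = -1`, and `2s + (t + 2) = t`
        · have := step (-1) (t + 2) (hneg 1 (by simpa using h1))
            (by exact_mod_cast ih (t + 2) (by omega)) (by simpa [add_comm] using ih t (by omega))
          convert this using 2 <;> push_cast <;> ring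
  obtain ⟨n, rfl | rfl⟩ := i.eq_nat_or_neg
  · exact hnat n
  · exact hneg n (hnat n)

theorem add_two_eq_mul_left_of_shift
    (h : ∀ w, A (w + 2) * (A w)⁻¹ = A (w + 1) * (A (w - 1))⁻¹) (w : ℤ) :
    A (w + 2) = A 2 * (A 0)⁻¹ * A w := by
  have hper : Function.Periodic (fun w => A (w + 2) * (A w)⁻¹) 1 := fun w => by
    simpa [add_assoc, one_add_one_eq_two] using h (w + 1)
  have := hper.int_mul_eq w
  simp only [Int.cast_id, mul_one, zero_add] at this
  rw [← this, inv_mul_cancel_right]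

theorem add_two_eq_mul_right_of_shift
    (h : ∀ w, (A w)⁻¹ * A (w + 2) = (A (w + 1))⁻¹ * A (w + 3)) (w : ℤ) :
    A (w + 2) = A w * ((A 0)⁻¹ * A 2) := by
  have hper : Function.Periodic (fun w => (A w)⁻¹ * A (w + 2)) 1 := fun w => by
    simpa [add_assoc] using (h w).symm
  have := hper.int_mul_eq w
  simp only [Int.cast_id, mul_one, zero_add] at this
  rw [← this, mul_inv_cancel_left]

theorem add_two_mul_eq_zpow_mul (hc : ∀ w, A (w + 2) = c * A w) (w t : ℤ) :
    A (w + 2 * t) = c ^ t * A w := by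
  have hper : Function.Periodic (fun t => (c ^ t)⁻¹ * A (w + 2 * t)) 1 := fun t => by
    simp only [mul_add, mul_one, ← add_assoc, hc, zpow_add_one]; group
  have := hper.int_mul_eq t
  simp only [Int.cast_id, mul_one, mul_zero, add_zero, zpow_zero, inv_one, one_mul] at this
  rw [← this, mul_inv_cancel_left]

theorem periodic_mul_inv_of_add_two (hc : ∀ w, A (w + 2) = c * A w)
    (hd : ∀ w, A (w + 2) = A w * d) (k : ℤ) :
    Function.Periodic (fun w => A (w + k) * (A w)⁻¹) 2 := fun w => by
  have hd' : d = (A w)⁻¹ * (c * A w) := eq_inv_mul_of_mul_eq ((hd w).symm.trans (hc w))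
  have hcomm : c * A (w + k) = A (w + k) * d := (hc _).symm.trans (hd _)
  dsimp only
  rw [add_right_comm, hc, hc, hcomm, hd']
  group

theorem inv_mul_eq_inv_mul_of_shift
    (hC : ∀ w, A (w + 2) * (A w)⁻¹ = A (w + 1) * (A (w - 1))⁻¹)
    (hD : ∀ w, (A w)⁻¹ * A (w + 2) = (A (w + 1))⁻¹ * A (w + 3))
    {m n k : ℤ} (hpar : Even k ∨ Even (m + n)) :
    (A (-n))⁻¹ * A m = (A (k - n))⁻¹ * A (m + k) := by
  have hc := add_two_eq_mul_left_of_shift hC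
  have hd := add_two_eq_mul_right_of_shift hD
  suffices h : A (-n + k) * (A (-n))⁻¹ = A (m + k) * (A m)⁻¹ by
    have hm : A (m + k) = A (-n + k) * (A (-n))⁻¹ * A m := by rw [h]; group
    rw [hm, sub_eq_neg_add]; group
  rcases hpar with ⟨t, rfl⟩ | ⟨u, hu⟩
  · simp only [← two_mul, add_two_mul_eq_zpow_mul hc]; group
  · have := (periodic_mul_inv_of_add_two hc hd k).int_mul u (-n)
    rw [Int.cast_id, show -n + u * 2 = m by omega] at this
    exact this.symm

end ShiftIdentity

def Flexible (M : Type*) [Mul M] : Prop :=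
  ∀ x y : M, x * (y * x) = (x * y) * x

-- `R(x)R(yxy) = R(xyx)R(y)`, applied to `z`
def RightARIF (M : Type*) [Mul M] : Prop :=
  ∀ x y z : M, (z * x) * (y * (x * y)) = (z * (x * (y * x))) * y

-- `L(x)L(yxy) = L(xyx)L(y)`, applied to `z`
def LeftARIF (M : Type*) [Mul M] : Prop :=
  ∀ x y z : M, (y * (x * y)) * (x * z) = y * ((x * (y * x)) * z)

namespace IPLoop

variable {M : Type*} [IPLoop M]

theorem inv_eq_of_mul_eq_one {a b : M} (h : a * b = 1) : a⁻¹ = b := by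
  rw [← inv_mul_cancel_left a b, h, Loop.mul_one]

theorem inv_inv (a : M) : a⁻¹⁻¹ = a :=
  inv_eq_of_mul_eq_one (by simpa only [Loop.mul_one] using inv_mul_cancel_left a 1)

theorem mul_inv_rev (a b : M) : (a * b)⁻¹ = b⁻¹ * a⁻¹ :=
  calc (a * b)⁻¹ = ((a * b)⁻¹ * ((a * b) * b⁻¹)) * a⁻¹ := by
        rw [mul_inv_cancel_right, mul_inv_cancel_right]
    _ = b⁻¹ * a⁻¹ := by rw [inv_mul_cancel_left]

theorem mul_inv_mul_cancel_right (a w : M) : (w * a⁻¹) * a = w := by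
  simpa only [inv_inv] using mul_inv_cancel_right a⁻¹ w

theorem Lperm_inv (a : M) : Loop.Lperm a⁻¹ = (Loop.Lperm a)⁻¹ :=
  eq_inv_of_mul_eq_one_left (Equiv.ext (inv_mul_cancel_left a))

theorem Rperm_inv (a : M) : Loop.Rperm a⁻¹ = (Loop.Rperm a)⁻¹ :=
  eq_inv_of_mul_eq_one_left (Equiv.ext fun w => mul_inv_cancel_right a w)

end IPLoop

namespace Loop

variable {M : Type*} [IPLoop M]

@[simp] theorem Lperm_apply (a w : M) : Lperm a w = a * w := rfl

@[simp] theorem Rperm_apply (a w : M) : Rperm a w = w * a := rfl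

@[simp] theorem pow_zero (x : M) : pow x 0 = 1 := rfl

@[simp] theorem pow_one (x : M) : pow x 1 = x := mul_one x

theorem pow_mul_pow_of_Lperm {x : M} {i : ℤ} (hi : Lperm (pow x i) = Lperm x ^ i) (j : ℤ) :
    pow x i * pow x j = pow x (i + j) := by
  rw [← Lperm_apply, hi, pow, pow, zpow_add, Equiv.Perm.mul_apply]

theorem pow_neg_of_Lperm {x : M} {i : ℤ} (hi : Lperm (pow x i) = Lperm x ^ i) :
    pow x (-i) = (pow x i)⁻¹ :=
  (IPLoop.inv_eq_of_mul_eq_one (by rw [pow_mul_pow_of_Lperm hi, add_neg_cancel, pow_zero])).symm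

theorem Lperm_pow (hL : LeftARIF M) (x : M) (i : ℤ) : Lperm (pow x i) = Lperm x ^ i := by
  refine eq_zpow_of_step (φ := fun i => Lperm (pow x i)) (Equiv.ext one_mul)
    (by simp only [pow_one]) (fun i hi => ?_) (fun s t hs ht => ?_) i
  · simp only [pow_neg_of_Lperm hi, IPLoop.Lperm_inv, hi, zpow_neg]
  · ext z
    have h := hL (pow x s) (pow x t) z
    simpa only [pow_mul_pow_of_Lperm hs, pow_mul_pow_of_Lperm ht, Equiv.Perm.mul_apply,
      Lperm_apply, show t + (s + t) = s + 2 * t by ring, show s + (t + s) = 2 * s + t by ring]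
      using h

theorem pow_add (hL : LeftARIF M) (x : M) (i j : ℤ) : pow x i * pow x j = pow x (i + j) :=
  pow_mul_pow_of_Lperm (Lperm_pow hL x i) j

theorem pow_neg (hL : LeftARIF M) (x : M) (i : ℤ) : pow x (-i) = (pow x i)⁻¹ :=
  pow_neg_of_Lperm (Lperm_pow hL x i)

theorem Rperm_pow (hL : LeftARIF M) (hR : RightARIF M) (x : M) (i : ℤ) :
    Rperm (pow x i) = Rperm x ^ i := by
  refine eq_zpow_of_step (φ := fun i => Rperm (pow x i)) (Equiv.ext mul_one)
    (by simp only [pow_one]) (fun i hi => ?_) (fun s t _ _ => ?_) i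
  · simp only [pow_neg hL, IPLoop.Rperm_inv, hi, zpow_neg]
  · ext z
    have h := hR (pow x s) (pow x t) z
    simpa only [pow_add hL, Equiv.Perm.mul_apply, Rperm_apply,
      show t + (s + t) = s + 2 * t by ring, show s + (t + s) = 2 * s + t by ring] using h

theorem pow_mul_pow_mul (hL : LeftARIF M) (x w : M) (i j : ℤ) :
    pow x i * (pow x j * w) = pow x (i + j) * w := by
  simp only [← Lperm_apply, Lperm_pow hL, zpow_add, Equiv.Perm.mul_apply]

theorem mul_pow_mul_pow (hL : LeftARIF M) (hR : RightARIF M) (x w : M) (i j : ℤ) :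
    (w * pow x i) * pow x j = w * pow x (i + j) := by
  simp only [← Rperm_apply, Rperm_pow hL hR, add_comm i j, zpow_add, Equiv.Perm.mul_apply]

theorem pow_mul_inv_mul_mul_pow (hL : LeftARIF M) (x y : M) (i j : ℤ) :
    (pow x j * y⁻¹) * (y * pow x i) = pow x (j + i) := by
  have h : pow x j * y⁻¹ = pow x (j + i) * (y * pow x i)⁻¹ := by
    rw [IPLoop.mul_inv_rev, ← pow_neg hL, pow_mul_pow_mul hL, add_neg_cancel_right]
  rw [h, IPLoop.mul_inv_mul_cancel_right]

theorem Rperm_mul_pow_inv (hL : LeftARIF M) (x y : M) (i : ℤ) :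
    (Rperm (y * pow x i))⁻¹ = Rperm (pow x (-i) * y⁻¹) := by
  rw [← IPLoop.Rperm_inv, IPLoop.mul_inv_rev, pow_neg hL]

theorem Rperm_mul_pow_mul_inv_shift (hflex : Flexible M) (hL : LeftARIF M) (hR : RightARIF M)
    (x y : M) (w : ℤ) :
    Rperm (y * pow x (w + 2)) * (Rperm (y * pow x w))⁻¹ =
      Rperm (y * pow x (w + 1)) * (Rperm (y * pow x (w - 1)))⁻¹ := by
  ext z
  simp only [Equiv.Perm.mul_apply, Rperm_mul_pow_inv hL, Rperm_apply]
  have h := hR (pow x (-w) * y⁻¹) (y * pow x (w + 1)) z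
  rw [hflex (pow x (-w) * y⁻¹), pow_mul_inv_mul_mul_pow hL, neg_add_cancel_left,
    pow_mul_pow_mul hL, mul_pow_mul_pow hL hR] at h
  rwa [show w + 1 + 1 = w + 2 by ring, show 1 + -w = -(w - 1) by ring] at h

theorem Rperm_mul_pow_inv_mul_shift (hflex : Flexible M) (hL : LeftARIF M) (hR : RightARIF M)
    (x y : M) (w : ℤ) :
    (Rperm (y * pow x w))⁻¹ * Rperm (y * pow x (w + 2)) =
      (Rperm (y * pow x (w + 1)))⁻¹ * Rperm (y * pow x (w + 3)) := by
  ext z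
  simp only [Equiv.Perm.mul_apply, Rperm_mul_pow_inv hL, Rperm_apply]
  have h := hR (y * pow x (w + 2)) (pow x (-(w + 1)) * y⁻¹) z
  rw [hflex (pow x (-(w + 1)) * y⁻¹), pow_mul_inv_mul_mul_pow hL,
    show -(w + 1) + (w + 2) = 1 by ring, pow_mul_pow_mul hL, mul_pow_mul_pow hL hR] at h
  rwa [show 1 + -(w + 1) = -w by ring, show w + 2 + 1 = w + 3 by ring] at h

end Loop

/-- In any ARIF loop, `R(y·xᵐ)R(xⁿ·y⁻¹) = R(y·x^{m+k})R(x^{n-k}·y⁻¹)` (pointwise)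
whenever `k` is even or `m + n` is even. -/
theorem arif_rrll {M : Type*} [IPLoop M]
    (hflex : ∀ x y : M, x * (y * x) = (x * y) * x)
    (hW1 : ∀ x y z : M, (z * x) * (y * (x * y)) = (z * (x * (y * x))) * y)
    (hW2 : ∀ x y z : M, (y * (x * y)) * (x * z) = y * ((x * (y * x)) * z)) :
    ∀ (x y : M) (m n k : ℤ), (Even k ∨ Even (m + n)) →
      ∀ z : M,
        (z * (y * Loop.pow x m)) * (Loop.pow x n * y⁻¹) =
          (z * (y * Loop.pow x (m + k))) * (Loop.pow x (n - k) * y⁻¹) := by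
  intro x y m n k hpar z
  have h := inv_mul_eq_inv_mul_of_shift (A := fun i => Loop.Rperm (y * Loop.pow x i))
    (Loop.Rperm_mul_pow_mul_inv_shift hflex hW2 hW1 x y)
    (Loop.Rperm_mul_pow_inv_mul_shift hflex hW2 hW1 x y) hpar
  simpa only [Loop.Rperm_mul_pow_inv hW2, neg_neg, neg_sub, Equiv.Perm.mul_apply,
    Loop.Rperm_apply] using congrArg (· z) h
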